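/- arXiv:2601.03325 — 3 statements merged into one kernel-verified Lean document; each statement's English description precedes it below -/
import Mathlib

section
/- A finite collection of multivariate Gaussian density functions on R^m with pairwise distinct (mean, covariance) pairs is linearly independent: if Σ_{k=1}^K γ_k N(z; μ_k, Σ_k) = 0 for all z ∈ R^m, where the pairs (μ_k, Σ_k) are distinct and each Σ_k is positive definite, then all γ_k = 0. -/
/-!
Restrict the identity to a line `z = t • v`. There the `k`-th density is a positive constant times
`exp (a k * t ^ 2 + b k * t)` with `a k = -vᵀ Σₖ⁻¹ v / 2` and `b k = vᵀ Σₖ⁻¹ μₖ`. The pairs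
`(Σₖ⁻¹, Σₖ⁻¹ μₖ)` are distinct, so for `k ≠ l` the polynomial
`v ↦ vᵀ (Σₖ⁻¹ - Σₗ⁻¹) v + vᵀ (Σₖ⁻¹ μₖ - Σₗ⁻¹ μₗ)` is nonzero, and a `v` outside all of their zero
sets makes the pairs `(a k, b k)` distinct. As `t → ∞` the term with the lexicographically largest
`(a k, b k)` among those with nonzero coefficient dominates all the others, so no such term exists.
-/

open MeasureTheory Matrix

/-- The multivariate Gaussian density on `ι → ℝ` with mean `μ` and
(positive definite) covariance matrix `S`. -/
noncomputable def gaussianPDF {ι : Type*} [Fintype ι] [DecidableEq ι]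
    (μ : ι → ℝ) (S : Matrix ι ι ℝ) (z : ι → ℝ) : ℝ :=
  Real.exp (-(1 / 2) * ((z - μ) ⬝ᵥ S⁻¹.mulVec (z - μ))) /
    Real.sqrt ((2 * Real.pi) ^ Fintype.card ι * S.det)

open Finset Filter Topology

theorem Matrix.IsSymm.eq_zero_of_dotProduct_mulVec_self_eq_zero {n K : Type*} [Fintype n]
    [Field K] [NeZero (2 : K)] {M : Matrix n n K} (hM : M.IsSymm)
    (h : ∀ v, v ⬝ᵥ M *ᵥ v = 0) : M = 0 := by
  classical
  have hbilin : ∀ x y, x ⬝ᵥ M *ᵥ y = 0 := by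
    intro x y
    have hswap : y ⬝ᵥ M *ᵥ x = x ⬝ᵥ M *ᵥ y := by
      rw [dotProduct_mulVec, ← mulVec_transpose, hM.eq, dotProduct_comm]
    have hxy := h (x + y)
    rw [mulVec_add, dotProduct_add, add_dotProduct, add_dotProduct, h x, h y, hswap] at hxy
    have : (2 : K) * (x ⬝ᵥ M *ᵥ y) = 0 := by linear_combination hxy
    exact (mul_eq_zero.1 this).resolve_left two_ne_zero
  ext i j
  simpa using hbilin (Pi.single i 1) (Pi.single j 1)

theorem Matrix.IsSymm.eq_zero_of_dotProduct_mulVec_self_add_eq_zero {n K : Type*} [Fintype n]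
    [Field K] [NeZero (2 : K)] {M : Matrix n n K} (hM : M.IsSymm) {u : n → K}
    (h : ∀ v, v ⬝ᵥ M *ᵥ v + u ⬝ᵥ v = 0) : M = 0 ∧ u = 0 := by
  classical
  have hquad : ∀ v, v ⬝ᵥ M *ᵥ v = 0 := by
    intro v
    have hneg := h (-v)
    rw [mulVec_neg, neg_dotProduct, dotProduct_neg, neg_neg, dotProduct_neg] at hneg
    have : (2 : K) * (v ⬝ᵥ M *ᵥ v) = 0 := by linear_combination h v + hneg
    exact (mul_eq_zero.1 this).resolve_left two_ne_zero
  have hlin : ∀ v, u ⬝ᵥ v = 0 := fun v => by simpa [hquad v] using h v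
  refine ⟨hM.eq_zero_of_dotProduct_mulVec_self_eq_zero hquad, funext fun i => ?_⟩
  simpa using hlin (Pi.single i 1)

theorem exists_eval_eq_dotProduct_mulVec_self_add {n R : Type*} [Fintype n] [CommRing R]
    (M : Matrix n n R) (u : n → R) :
    ∃ P : MvPolynomial n R, ∀ v, MvPolynomial.eval v P = v ⬝ᵥ M *ᵥ v + u ⬝ᵥ v := by
  refine ⟨∑ i, ∑ j, MvPolynomial.C (M i j) * .X i * .X j + ∑ i, .C (u i) * .X i, fun v => ?_⟩
  simp only [map_add, map_sum, map_mul, MvPolynomial.eval_C, MvPolynomial.eval_X, dotProduct,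
    mulVec, mul_sum]
  congr 1
  exact sum_congr rfl fun i _ => sum_congr rfl fun j _ => by ring

theorem MvPolynomial.exists_forall_eval_ne_zero {σ ι R : Type*} [CommRing R] [IsDomain R]
    [Infinite R] (s : Finset ι) {P : ι → MvPolynomial σ R} (hP : ∀ i ∈ s, P i ≠ 0) :
    ∃ x, ∀ i ∈ s, eval x (P i) ≠ 0 := by
  obtain ⟨x, hx⟩ : ∃ x, eval x (∏ i ∈ s, P i) ≠ 0 := by
    by_contra! h
    exact prod_ne_zero_iff.2 hP (funext fun x => by simpa using h x)
  exact ⟨x, prod_ne_zero_iff.1 (by rwa [map_prod] at hx)⟩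

theorem exists_injective_dotProduct_mulVec_self {ι n K : Type*} [Fintype ι] [Fintype n]
    [Field K] [CharZero K] {A : ι → Matrix n n K} {b : ι → n → K} (hA : ∀ i, (A i).IsSymm)
    (hinj : Function.Injective fun i => (A i, b i)) :
    ∃ v, Function.Injective fun i => (v ⬝ᵥ A i *ᵥ v, v ⬝ᵥ b i) := by
  classical
  choose P hP using fun p : ι × ι =>
    exists_eval_eq_dotProduct_mulVec_self_add (A p.1 - A p.2) (b p.1 - b p.2)
  have hP_ne_zero : ∀ p ∈ univ.offDiag, P p ≠ 0 := by
    rintro ⟨i, j⟩ hij hPij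
    obtain ⟨hAij, hbij⟩ := ((hA i).sub (hA j)).eq_zero_of_dotProduct_mulVec_self_add_eq_zero
      (u := b i - b j) fun v => by rw [← hP (i, j), hPij, map_zero]
    exact (mem_offDiag.1 hij).2.2 (hinj (Prod.ext (sub_eq_zero.1 hAij) (sub_eq_zero.1 hbij)))
  obtain ⟨v, hv⟩ := MvPolynomial.exists_forall_eval_ne_zero _ hP_ne_zero
  refine ⟨v, fun i j hij => by_contra fun hne => hv (i, j) (by simp [hne]) ?_⟩
  simp only [Prod.mk.injEq] at hij
  rw [hP, dotProduct_comm _ v]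
  simp [sub_mulVec, dotProduct_sub, hij.1, hij.2]

theorem tendsto_exp_quadratic_atTop_zero {a b : ℝ} (h : a < 0 ∨ a = 0 ∧ b < 0) :
    Tendsto (fun t : ℝ => Real.exp (a * t ^ 2 + b * t)) atTop (𝓝 0) := by
  refine Real.tendsto_exp_atBot.comp ?_
  rcases h with ha | ⟨rfl, hb⟩
  · have : Tendsto (fun t : ℝ => t * (a * t + b)) atTop atBot := tendsto_id.atTop_mul_atBot₀
      ((tendsto_id.const_mul_atTop_of_neg ha).atBot_add tendsto_const_nhds)
    exact this.congr fun t => by ring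
  · simpa using tendsto_id.const_mul_atTop_of_neg hb

theorem linearIndependent_exp_quadratic {ι : Type*} [Fintype ι] {a b : ι → ℝ}
    (hab : Function.Injective fun k => (a k, b k)) :
    LinearIndependent ℝ fun k (t : ℝ) => Real.exp (a k * t ^ 2 + b k * t) := by
  classical
  rw [Fintype.linearIndependent_iff]
  intro c hc
  by_contra! hne
  obtain ⟨k₀, hk₀, hmax⟩ := (univ.filter (c · ≠ 0)).exists_max_image
    (fun k => toLex (a k, b k)) (by simpa [Finset.filter_nonempty_iff] using hne)
  have hzero : ∀ t, ∑ k, c k * Real.exp ((a k - a k₀) * t ^ 2 + (b k - b k₀) * t) = 0 := by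
    intro t
    have hct := congrFun hc t
    simp only [Finset.sum_apply, Pi.smul_apply, smul_eq_mul, Pi.zero_apply] at hct
    calc _ = Real.exp (-(a k₀ * t ^ 2 + b k₀ * t)) *
          ∑ k, c k * Real.exp (a k * t ^ 2 + b k * t) := by
          rw [mul_sum]
          refine sum_congr rfl fun k _ => ?_
          rw [mul_left_comm, ← Real.exp_add]
          ring_nf
      _ = 0 := by rw [hct, mul_zero]
  have hlim : Tendsto (fun t => ∑ k, c k * Real.exp ((a k - a k₀) * t ^ 2 + (b k - b k₀) * t))
      atTop (𝓝 (∑ k, if k = k₀ then c k₀ else 0)) := by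
    refine tendsto_finsetSum _ fun k _ => ?_
    split_ifs with hk
    · subst hk; simp
    by_cases hck : c k = 0
    · simp [hck]
    have hlt : toLex (a k, b k) < toLex (a k₀, b k₀) :=
      (hmax k (by simp [hck])).lt_of_ne fun h => hk (hab (toLex.injective h))
    rw [Prod.Lex.toLex_lt_toLex] at hlt
    simpa using (tendsto_exp_quadratic_atTop_zero
      (by simpa [sub_neg, sub_eq_zero] using hlt)).const_mul (c k)
  simp only [hzero, sum_ite_eq', mem_univ, if_true] at hlim
  exact (mem_filter.1 hk₀).2 (tendsto_nhds_unique hlim tendsto_const_nhds)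

theorem injective_inv_mulVec {ι n K : Type*} [Fintype n] [DecidableEq n] [Field K]
    {μ : ι → n → K} {S : ι → Matrix n n K} (hS : ∀ i, IsUnit (S i).det)
    (hinj : Function.Injective fun i => (μ i, S i)) :
    Function.Injective fun i => ((S i)⁻¹, (S i)⁻¹ *ᵥ μ i) := by
  intro i j hij
  simp only [Prod.mk.injEq] at hij
  have hS_eq : S i = S j := inv_inj hij.1 (hS i)
  have hμ_eq : μ i = μ j :=
    mulVec_injective_iff_isUnit.2 ((isUnit_iff_isUnit_det _).2 (isUnit_nonsing_inv_det _ (hS j)))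
      (by rw [hS_eq] at hij; exact hij.2)
  exact hinj (Prod.ext hμ_eq hS_eq)

section Gaussian

variable {ι : Type*} [Fintype ι] [DecidableEq ι] (μ : ι → ℝ) {S : Matrix ι ι ℝ}

theorem gaussianPDF_pos (hS : 0 < S.det) (z : ι → ℝ) : 0 < gaussianPDF μ S z := by
  unfold gaussianPDF
  positivity

theorem gaussianPDF_smul (hS : S.IsSymm) (v : ι → ℝ) (t : ℝ) :
    gaussianPDF μ S (t • v) =
      gaussianPDF μ S 0 * Real.exp (-(v ⬝ᵥ S⁻¹ *ᵥ v) / 2 * t ^ 2 + (v ⬝ᵥ S⁻¹ *ᵥ μ) * t) := by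
  have hswap : μ ⬝ᵥ S⁻¹ *ᵥ v = v ⬝ᵥ S⁻¹ *ᵥ μ := by
    rw [dotProduct_mulVec, ← mulVec_transpose, hS.inv.eq, dotProduct_comm]
  have hquad : (t • v - μ) ⬝ᵥ S⁻¹ *ᵥ (t • v - μ) =
      t ^ 2 * (v ⬝ᵥ S⁻¹ *ᵥ v) - 2 * t * (v ⬝ᵥ S⁻¹ *ᵥ μ) + μ ⬝ᵥ S⁻¹ *ᵥ μ := by
    simp only [mulVec_sub, mulVec_smul, dotProduct_sub, sub_dotProduct, dotProduct_smul,
      smul_dotProduct, smul_eq_mul, hswap]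
    ring
  simp only [gaussianPDF, hquad, zero_sub, mulVec_neg, neg_dotProduct, dotProduct_neg, neg_neg]
  rw [div_mul_eq_mul_div, ← Real.exp_add]
  ring_nf

end Gaussian

/-- finitely many multivariate Gaussian densities with pairwise
distinct (mean, covariance) pairs are linearly independent. -/
theorem stmt2 {m K : ℕ} (μ : Fin K → Fin m → ℝ) (S : Fin K → Matrix (Fin m) (Fin m) ℝ)
    (hpd : ∀ k, (S k).PosDef)
    (hdist : ∀ k k', k ≠ k' → μ k ≠ μ k' ∨ S k ≠ S k')
    (γ : Fin K → ℝ)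
    (hzero : ∀ z : Fin m → ℝ, ∑ k, γ k * gaussianPDF (μ k) (S k) z = 0) :
    ∀ k, γ k = 0 := by
  have hsymm : ∀ k, (S k).IsSymm := fun k => isHermitian_iff_isSymm.1 (hpd k).isHermitian
  have hinj : Function.Injective fun k => (μ k, S k) := fun k k' h =>
    by_contra fun hne => (hdist k k' hne).elim (· congr($h.1)) (· congr($h.2))
  obtain ⟨v, hv⟩ := exists_injective_dotProduct_mulVec_self (fun k => (hsymm k).inv)
    (injective_inv_mulVec (fun k => (hpd k).det_pos.ne'.isUnit) hinj)
  have hli := linearIndependent_exp_quadratic (a := fun k => -(v ⬝ᵥ (S k)⁻¹ *ᵥ v) / 2)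
    (b := fun k => v ⬝ᵥ (S k)⁻¹ *ᵥ μ k) fun k k' h => hv (by simpa using h)
  have hγ := Fintype.linearIndependent_iff.1 hli (fun k => γ k * gaussianPDF (μ k) (S k) 0)
    (funext fun t => by simpa [gaussianPDF_smul _ (hsymm _), mul_assoc] using hzero (t • v))
  exact fun k => (mul_eq_zero.1 (hγ k)).resolve_right (gaussianPDF_pos _ (hpd k).det_pos 0).ne'
end

section
/- (LIPO-1) Let U_I = {u_i(y,x) : i ∈ I} and V_J = {v_j(z,y) : j ∈ J} be families of strictly positive real-valued functions with x ∈ X, y ∈ R^{d_y}, z ∈ R^{d_z}. Assume: (a3) for any positive-measure Y ⊂ R^{d_y}, every finite subset of U_I is linearly independent on Y × X; (a4) there exists a positive-measure Y ⊂ R^{d_y} such that for every positive-measure Y' ⊂ Y and positive-measure Z ⊂ R^{d_z}, every finite subset of V_J is linearly independent on Z × Y'; (a5) for any β ∈ R^{d_y}, positive-measure Z ⊂ R^{d_z}, and finite J_0 ⊂ J, linear dependence of {v_j(·, β) : j ∈ J_0} on Z implies two of these functions are identical on all of R^{d_z}; (a6) each v_j(z,y) is continuous in y. Then for every positive-measure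 Z ⊂ R^{d_z}, the product family {v_j(z,y) u_i(y,x) : i ∈ I, j ∈ J} is linearly independent under finite mixtures on X × R^{d_y} × Z. -/
/-!
Let `∑ c_{ij} v_j(z,y) u_i(y,x) = 0` be a finite dependence. By (a4), two distinct `v_j` have
equal `y`-sections only for a null set of `y` in `Y`, so on a positive-measure `Y₀ ⊆ Y` the
finitely many sections `v_j(·,y)` are pairwise distinct and hence, by (a5), linearly independent
on `Z`. Freezing `(x, y)` with `y ∈ Y₀` and reading off the coefficient of each `v_j(·,y)` gives
`∑_i c_{ij} u_i(y,x) = 0` on `Y₀ × X`, and (a3) forces every `c_{ij}` to vanish.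
-/

open MeasureTheory

/-- Linear independence (under finite mixtures) of a family of functions
restricted to a subset `S` of their domain. -/
def LinIndepOn {A E : Type*} (S : Set E) (F : A → E → ℝ) : Prop :=
  ∀ (n : ℕ) (a : Fin n → A), Function.Injective a →
    LinearIndependent ℝ (fun i : Fin n => S.restrict (F (a i)))

theorem linIndepOn_iff_linearIndependent {A E : Type*} {S : Set E} {F : A → E → ℝ} :
    LinIndepOn S F ↔ LinearIndependent ℝ (fun a => S.domRestrict (F a)) := by
  refine ⟨fun h => linearIndependent_iff_finset_linearIndependent.2 fun s => ?_,
    fun h n a ha => h.comp a ha⟩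
  let e := s.equivFin
  exact (linearIndependent_equiv e.symm).1
    (h s.card (Subtype.val ∘ e.symm) (Subtype.val_injective.comp e.symm.injective))

theorem LinearIndepOn.sum_fiber_eq_zero {R M ι κ : Type*} [Ring R] [AddCommGroup M] [Module R M]
    [DecidableEq ι] {g : ι → M} {t : Set ι} (hg : LinearIndepOn R g t) {s : Finset κ}
    {σ : κ → ι} (hσ : ∀ k ∈ s, σ k ∈ t) {c : κ → R} (h : ∑ k ∈ s, c k • g (σ k) = 0) (i : ι) :
    ∑ k ∈ s with σ k = i, c k = 0 := by
  by_cases hi : i ∈ s.image σ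
  · refine linearIndepOn_iff'.1 hg (s.image σ) (fun j => ∑ k ∈ s with σ k = j, c k) ?_ ?_ i hi
    · simpa [Set.subset_def] using hσ
    · rw [← h, ← Finset.sum_fiberwise_of_maps_to fun k hk => Finset.mem_image_of_mem σ hk]
      refine Finset.sum_congr rfl fun j _ => ?_
      rw [Finset.sum_smul]
      exact Finset.sum_congr rfl fun k hk => by rw [(Finset.mem_filter.1 hk).2]
  · rw [Finset.filter_false_of_mem, Finset.sum_empty]
    exact fun k hk hki => hi (hki ▸ Finset.mem_image_of_mem σ hk)

theorem linearIndepOn_of_injOn {J E : Type*} {f : J → E → ℝ} {Z : Set E}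
    (hf : ∀ (n : ℕ) (a : Fin n → J), Function.Injective a →
      ¬ LinearIndependent ℝ (fun i => Z.domRestrict (f (a i))) →
      ∃ i i', i ≠ i' ∧ f (a i) = f (a i'))
    {t : Finset J} (ht : Set.InjOn f t) : LinearIndepOn ℝ (fun j => Z.domRestrict (f j)) t := by
  let e := t.equivFin
  by_contra hdep
  obtain ⟨i, i', hne, heq⟩ := hf t.card (Subtype.val ∘ e.symm)
    (Subtype.val_injective.comp e.symm.injective)
    (by rwa [LinearIndepOn, ← linearIndependent_equiv e.symm] at hdep)
  exact hne (e.symm.injective (Subtype.val_injective (ht (e.symm i).2 (e.symm i').2 heq)))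

section Sections

variable {J E F : Type*} [MeasurableSpace F] {μ : Measure F} {v : J → E → F → ℝ}
  {Y : Set F} {Z : Set E}

theorem measure_inter_setOf_sections_eq_eq_zero
    (hY : ∀ Y' ⊆ Y, 0 < μ Y' → LinIndepOn (Z ×ˢ Y') (fun j (p : E × F) => v j p.1 p.2))
    {j j' : J} (hne : j ≠ j') : μ (Y ∩ {y | (fun z => v j z y) = fun z => v j' z y}) = 0 := by
  by_contra h
  have hli := linIndepOn_iff_linearIndependent.1
    (hY _ Set.inter_subset_left (pos_iff_ne_zero.2 h))
  refine hne (hli.injective ?_)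
  funext ⟨p, hp⟩
  exact congrFun hp.2.2 p.1

theorem measure_inter_setOf_not_injOn_sections_eq_zero
    (hY : ∀ Y' ⊆ Y, 0 < μ Y' → LinIndepOn (Z ×ˢ Y') (fun j (p : E × F) => v j p.1 p.2))
    (t : Finset J) : μ (Y ∩ {y | ¬ Set.InjOn (fun j z => v j z y) t}) = 0 := by
  classical
  refine measure_mono_null ?_ ((measure_biUnion_null_iff t.offDiag.countable_toSet).2
    fun q hq => measure_inter_setOf_sections_eq_eq_zero hY (Finset.mem_offDiag.1 hq).2.2)
  rintro y ⟨hy, hinj⟩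
  simp only [Set.InjOn, not_forall] at hinj
  obtain ⟨j, hj, j', hj', heq, hne⟩ := hinj
  exact Set.mem_biUnion (x := (j, j')) (Finset.mem_offDiag.2 ⟨hj, hj', hne⟩) ⟨hy, heq⟩

end Sections

theorem stmt7_general {I J X : Type*} {dy dz : ℕ}
    (u : I → (Fin dy → ℝ) → X → ℝ)
    (v : J → (Fin dz → ℝ) → (Fin dy → ℝ) → ℝ)
    (ha3 : ∀ Y : Set (Fin dy → ℝ), 0 < volume Y →
      LinIndepOn (Y ×ˢ (Set.univ : Set X)) (fun i (p : (Fin dy → ℝ) × X) => u i p.1 p.2))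
    (ha4 : ∃ Y : Set (Fin dy → ℝ), 0 < volume Y ∧ ∀ Y' ⊆ Y, 0 < volume Y' →
      ∀ Z : Set (Fin dz → ℝ), 0 < volume Z →
        LinIndepOn (Z ×ˢ Y') (fun j (p : (Fin dz → ℝ) × (Fin dy → ℝ)) => v j p.1 p.2))
    (ha5 : ∀ (β : Fin dy → ℝ) (Z : Set (Fin dz → ℝ)), 0 < volume Z →
      ∀ (n : ℕ) (a : Fin n → J), Function.Injective a →
        ¬ LinearIndependent ℝ (fun i : Fin n => Z.restrict (fun z => v (a i) z β)) →
        ∃ i i', i ≠ i' ∧ (fun z => v (a i) z β) = (fun z => v (a i') z β)) :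
    ∀ Z : Set (Fin dz → ℝ), 0 < volume Z →
      LinIndepOn ((Set.univ : Set X) ×ˢ (Set.univ : Set (Fin dy → ℝ)) ×ˢ Z)
        (fun (ij : I × J) (p : X × (Fin dy → ℝ) × (Fin dz → ℝ)) =>
          v ij.2 p.2.2 p.2.1 * u ij.1 p.2.1 p.1) := by
  classical
  intro Z hZ
  obtain ⟨Y, hY, hYZ⟩ := ha4
  rw [linIndepOn_iff_linearIndependent, linearIndependent_iff']
  intro s c hc
  set Y₀ := Y \ {y | ¬ Set.InjOn (fun j z => v j z y) (s.image Prod.snd)}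
  have hY₀ : 0 < volume Y₀ := by
    rwa [measure_sdiff_null' (measure_inter_setOf_not_injOn_sections_eq_zero
      (fun Y' hY' hpos => hYZ Y' hY' hpos Z hZ) _)]
  have hfiber : ∀ y ∈ Y₀, ∀ x j, ∑ p ∈ s with p.2 = j, c p * u p.1 y x = 0 := by
    intro y hy x
    refine (linearIndepOn_of_injOn (f := fun j z => v j z y) (ha5 y Z hZ)
      (not_not.1 hy.2)).sum_fiber_eq_zero (σ := Prod.snd)
      (fun p hp => Finset.mem_image_of_mem _ hp) ?_
    funext ⟨z, hz⟩
    have hxyz := congrFun hc ⟨(x, y, z), trivial, trivial, hz⟩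
    simp only [Finset.sum_apply, Pi.smul_apply, Set.domRestrict_apply, smul_eq_mul,
      Pi.zero_apply] at hxyz ⊢
    rw [← hxyz]
    exact Finset.sum_congr rfl fun p _ => by ring
  intro p hp
  have hu := (linIndepOn_iff_linearIndependent.1 (ha3 Y₀ hY₀)).linearIndepOn Set.univ
  have hp' := hu.sum_fiber_eq_zero (s := s.filter (·.2 = p.2)) (σ := Prod.fst)
    (fun _ _ => trivial) (c := c) ?_ p.1
  · simpa only [Finset.filter_filter, and_comm, ← Prod.ext_iff, Finset.filter_eq', if_pos hp,
      Finset.sum_singleton] using hp'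
  · funext ⟨⟨y, x⟩, hy, _⟩
    simpa [Set.domRestrict_apply] using hfiber y hy x p.2

/-- **LIPO-1**: under positivity, linear independence of `U_I` on
every positive-measure set of the overlap variable (a3), linear independence of
`V_J` on `Z × Y'` for all positive-measure subsets `Y'` of some positive-measure
`Y` (a4), the "linear dependence implies repeated functions" dichotomy at fixed
overlap values (a5), and continuity in the overlap variable (a6), the product
family `{v_j(z,y) u_i(y,x)}` is linearly independent under finite mixtures on
`X × ℝ^{d_y} × Z` for every positive-measure `Z`. -/
theorem stmt7 {I J X : Type*} {dy dz : ℕ}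
    (u : I → (Fin dy → ℝ) → X → ℝ)
    (v : J → (Fin dz → ℝ) → (Fin dy → ℝ) → ℝ)
    (ha1u : ∀ i y x, 0 < u i y x)
    (ha1v : ∀ j z y, 0 < v j z y)
    (ha3 : ∀ Y : Set (Fin dy → ℝ), 0 < volume Y →
      LinIndepOn (Y ×ˢ (Set.univ : Set X)) (fun i (p : (Fin dy → ℝ) × X) => u i p.1 p.2))
    (ha4 : ∃ Y : Set (Fin dy → ℝ), 0 < volume Y ∧ ∀ Y' ⊆ Y, 0 < volume Y' →
      ∀ Z : Set (Fin dz → ℝ), 0 < volume Z →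
        LinIndepOn (Z ×ˢ Y') (fun j (p : (Fin dz → ℝ) × (Fin dy → ℝ)) => v j p.1 p.2))
    (ha5 : ∀ (β : Fin dy → ℝ) (Z : Set (Fin dz → ℝ)), 0 < volume Z →
      ∀ (n : ℕ) (a : Fin n → J), Function.Injective a →
        ¬ LinearIndependent ℝ (fun i : Fin n => Z.restrict (fun z => v (a i) z β)) →
        ∃ i i', i ≠ i' ∧ (fun z => v (a i) z β) = (fun z => v (a i') z β))
    (ha6 : ∀ j z, Continuous fun y => v j z y) :
    ∀ Z : Set (Fin dz → ℝ), 0 < volume Z →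
      LinIndepOn ((Set.univ : Set X) ×ˢ (Set.univ : Set (Fin dy → ℝ)) ×ˢ Z)
        (fun (ij : I × J) (p : X × (Fin dy → ℝ) × (Fin dz → ℝ)) =>
          v ij.2 p.2.2 p.2.1 * u ij.1 p.2.1 p.1) :=
  stmt7_general u v ha3 ha4 ha5
end

section
/- Let the trajectory family P^{T,M}_{A,B} = { p_a(z_{1:M}) ∏_{t=M+1}^T p_{b_t}(z_t | z_{t-1},…,z_{t-M}) : a ∈ A, b_t ∈ B } be linearly independent under finite mixtures on R^{Tm}. Then the Markov switching model family M^T(Π^M_A, P^M_B) is identifiable up to permutations: if two MSMs p and p̃ in the family agree as distributions on R^{Tm}, then they have equal numbers of mixture paths C = C̃, equal numbers of initial and transition components K_0 = K̃_0 and K = K̃, matched path weights c_i = c̃_j, equal corresponding initial densities, equal corresponding transition densities, and the equality pattern of transition indices across time is preserved (b^i_{t1} = b^i_{t2} iff b̃^j_{t1} = b̃^j_{t2}). -/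
open MeasureTheory

/-- Linear independence under finite mixtures: every finite subcollection of
components indexed by distinct indices is linearly independent over `ℝ`. -/
def LinIndepFM {A E : Type*} (F : A → E → ℝ) : Prop :=
  ∀ (n : ℕ) (a : Fin n → A), Function.Injective a →
    LinearIndependent ℝ (fun i : Fin n => F (a i))

/-- The density of a single mixture trajectory of an `M`-lag Markov switching
model of length `T = M + L`: initial density on `z_1,…,z_M` (array indices
`0,…,M-1`) times the `L` transition conditional densities, with the history at
time `t` being `(z_{t-1},…,z_{t-M})`. -/
noncomputable def trajDensity {A B : Type*} {m : ℕ} (M : ℕ)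
    (pInit : A → (Fin M → Fin m → ℝ) → ℝ)
    (pTrans : B → (Fin m → ℝ) → (Fin M → Fin m → ℝ) → ℝ)
    (L : ℕ) (a : A) (b : Fin L → B) (z : ℕ → Fin m → ℝ) : ℝ :=
  pInit a (fun i : Fin M => z (i : ℕ)) *
    ∏ s : Fin L,
      pTrans (b s) (z (M + (s : ℕ))) (fun τ : Fin M => z (M + (s : ℕ) - 1 - (τ : ℕ)))


/-- auxiliary: matching of mixture components under linear independence -/
lemma aux_match' {Γ E : Type*} (F : Γ → E → ℝ)
    (hLI : ∀ (n : ℕ) (a : Fin n → Γ), Function.Injective a →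
      LinearIndependent ℝ (fun i : Fin n => F (a i)))
    {n n' : ℕ} (p : Fin n → Γ) (q : Fin n' → Γ)
    (hp : Function.Injective p) (hq : Function.Injective q)
    (c : Fin n → ℝ) (c' : Fin n' → ℝ)
    (heq : ∀ z, ∑ i, c i * F (p i) z = ∑ j, c' j * F (q j) z) :
    ∀ i, c i ≠ 0 → ∃ j, q j = p i ∧ c' j = c i := by
  classical
  set S : Finset Γ := Finset.univ.image p ∪ Finset.univ.image q with hS
  have hliS : LinearIndependent ℝ (fun γ : {x // x ∈ S} => F (γ : Γ)) := by
    have h1 := hLI S.card (fun i => (S.equivFin.symm i : Γ))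
      (fun i j h => S.equivFin.symm.injective (Subtype.ext h))
    have h2 := h1.comp (fun γ => S.equivFin γ) S.equivFin.injective
    have he : (fun γ : {x // x ∈ S} => F (γ : Γ)) =
        (fun i => F ((S.equivFin.symm i : Γ))) ∘ (fun γ => S.equivFin γ) := by
      funext γ; simp
    rw [he]; exact h2
  set w : Γ → ℝ := fun γ =>
    (∑ i ∈ Finset.univ.filter (fun i => p i = γ), c i)
      - ∑ j ∈ Finset.univ.filter (fun j => q j = γ), c' j with hw
  have key : ∀ γ ∈ S, w γ = 0 := by
    have h0 : ∑ γ ∈ S, (w γ) • F γ = 0 := by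
      have hA : ∑ γ ∈ S, (∑ i ∈ Finset.univ.filter (fun i => p i = γ), c i) • F γ
          = ∑ i : Fin n, c i • F (p i) := by
        rw [← Finset.sum_fiberwise_of_maps_to (g := p) (t := S)
          (fun i _ => Finset.mem_union_left _
            (Finset.mem_image_of_mem p (Finset.mem_univ i))) (fun i => c i • F (p i))]
        refine Finset.sum_congr rfl fun γ hγ => ?_
        rw [Finset.sum_smul]
        refine Finset.sum_congr rfl fun i hi => ?_
        rw [(Finset.mem_filter.mp hi).2]
      have hB : ∑ γ ∈ S, (∑ j ∈ Finset.univ.filter (fun j => q j = γ), c' j) • F γ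
          = ∑ j : Fin n', c' j • F (q j) := by
        rw [← Finset.sum_fiberwise_of_maps_to (g := q) (t := S)
          (fun j _ => Finset.mem_union_right _
            (Finset.mem_image_of_mem q (Finset.mem_univ j))) (fun j => c' j • F (q j))]
        refine Finset.sum_congr rfl fun γ hγ => ?_
        rw [Finset.sum_smul]
        refine Finset.sum_congr rfl fun j hj => ?_
        rw [(Finset.mem_filter.mp hj).2]
      have hpq : ∑ i : Fin n, c i • F (p i) = ∑ j : Fin n', c' j • F (q j) := by
        funext z
        simpa [Finset.sum_apply, Pi.smul_apply, smul_eq_mul] using heq z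
      simp only [hw, sub_smul, Finset.sum_sub_distrib, hA, hB, hpq, sub_self]
    intro γ hγ
    have hs : ∑ γ : {x // x ∈ S}, w (γ : Γ) • F (γ : Γ) = 0 :=
      (Finset.sum_coe_sort S (fun γ => w γ • F γ)).trans h0
    exact (linearIndependent_iff'.mp hliS) Finset.univ (fun γ => w (γ : Γ)) hs
      ⟨γ, hγ⟩ (Finset.mem_univ _)
  intro i hci
  have hγ : p i ∈ S := Finset.mem_union_left _
    (Finset.mem_image_of_mem p (Finset.mem_univ i))
  have hwi := key (p i) hγ
  have hfp : Finset.univ.filter (fun i' => p i' = p i) = {i} := by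
    ext i'; simp [hp.eq_iff]
  rw [hw] at hwi
  simp only [] at hwi
  rw [hfp, Finset.sum_singleton, sub_eq_zero] at hwi
  have hne : (Finset.univ.filter (fun j => q j = p i)).Nonempty := by
    by_contra h
    rw [Finset.not_nonempty_iff_eq_empty] at h
    rw [h, Finset.sum_empty] at hwi
    exact hci hwi
  obtain ⟨j, hj⟩ := hne
  have hjq : q j = p i := (Finset.mem_filter.mp hj).2
  refine ⟨j, hjq, ?_⟩
  have hfq : Finset.univ.filter (fun j' => q j' = p i) = {j} := by
    ext j'
    simp only [Finset.mem_filter, Finset.mem_univ, true_and, Finset.mem_singleton]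
    exact ⟨fun h => hq (h.trans hjq.symm), fun h => h ▸ hjq⟩
  rw [hfq, Finset.sum_singleton] at hwi
  exact hwi.symm

/-- if the trajectory family is linearly independent under
finite mixtures, then the `M`-lag Markov switching model family is identifiable
up to permutations: equal mixtures force equal path counts `C = K₀ K^L`, equal
numbers of initial/transition components, matched weights, matched initial and
transition densities, and preservation of the equality pattern of transition
indices across time. -/
theorem stmt8 {A B : Type*} {m M L K0 K K0' K' : ℕ} (hM : 0 < M) (hL : 0 < L)
    (pInit : A → (Fin M → Fin m → ℝ) → ℝ)
    (pTrans : B → (Fin m → ℝ) → (Fin M → Fin m → ℝ) → ℝ)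
    (hInit_nonneg : ∀ a h, 0 ≤ pInit a h)
    (hInit_pdf : ∀ a, (∫ h, pInit a h) = 1)
    (hTrans_nonneg : ∀ b x h, 0 ≤ pTrans b x h)
    (hTrans_pdf : ∀ b h, (∫ x, pTrans b x h) = 1)
    (hLI : LinIndepFM (fun (ab : A × (Fin L → B)) =>
      trajDensity M pInit pTrans L ab.1 ab.2))
    -- first MSM
    (c : Fin (K0 * K ^ L) → ℝ) (aIdx : Fin (K0 * K ^ L) → A)
    (bIdx : Fin (K0 * K ^ L) → Fin L → B)
    (hc : ∀ i, 0 < c i) (hcsum : ∑ i, c i = 1)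
    (hA0 : ∃ A0 : Finset A, A0.card = K0 ∧ ∀ i, aIdx i ∈ A0)
    (hB0 : ∃ B0 : Finset B, B0.card = K ∧ ∀ i s, bIdx i s ∈ B0)
    (hdistinct : Function.Injective fun i => (aIdx i, bIdx i))
    -- second MSM
    (c' : Fin (K0' * K' ^ L) → ℝ) (aIdx' : Fin (K0' * K' ^ L) → A)
    (bIdx' : Fin (K0' * K' ^ L) → Fin L → B)
    (hc' : ∀ j, 0 < c' j) (hcsum' : ∑ j, c' j = 1)
    (hA0' : ∃ A0 : Finset A, A0.card = K0' ∧ ∀ j, aIdx' j ∈ A0)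
    (hB0' : ∃ B0 : Finset B, B0.card = K' ∧ ∀ j s, bIdx' j s ∈ B0)
    (hdistinct' : Function.Injective fun j => (aIdx' j, bIdx' j))
    -- equality of the two mixture distributions
    (heq : ∀ z : ℕ → Fin m → ℝ,
      ∑ i, c i * trajDensity M pInit pTrans L (aIdx i) (bIdx i) z =
      ∑ j, c' j * trajDensity M pInit pTrans L (aIdx' j) (bIdx' j) z) :
    K0 * K ^ L = K0' * K' ^ L ∧ K0 = K0' ∧ K = K' ∧
      ∀ i, ∃ j, c i = c' j ∧
        (∀ s1 s2 : Fin L, bIdx i s1 = bIdx i s2 ↔ bIdx' j s1 = bIdx' j s2) ∧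
        (∀ h, pInit (aIdx i) h = pInit (aIdx' j) h) ∧
        (∀ (s : Fin L) (x : Fin m → ℝ) (h : Fin M → Fin m → ℝ),
          pTrans (bIdx i s) x h = pTrans (bIdx' j s) x h) := by
  classical
  set F : A × (Fin L → B) → (ℕ → Fin m → ℝ) → ℝ :=
    fun ab => trajDensity M pInit pTrans L ab.1 ab.2 with hF
  set p : Fin (K0 * K ^ L) → A × (Fin L → B) := fun i => (aIdx i, bIdx i) with hpdef
  set q : Fin (K0' * K' ^ L) → A × (Fin L → B) := fun j => (aIdx' j, bIdx' j) with hqdef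
  have hp : Function.Injective p := hdistinct
  have hq : Function.Injective q := hdistinct'
  have hmatch : ∀ i, ∃ j, q j = p i ∧ c' j = c i :=
    fun i => aux_match' F hLI p q hp hq c c' heq i (hc i).ne'
  have hmatch' : ∀ j, ∃ i, p i = q j ∧ c i = c' j :=
    fun j => aux_match' F hLI q p hq hp c' c (fun z => (heq z).symm) j (hc' j).ne'
  have hCpos : 0 < K0 * K ^ L := by
    by_contra h
    push_neg at h
    have h0 : K0 * K ^ L = 0 := Nat.le_zero.mp h
    have : (1 : ℝ) = 0 := by
      rw [← hcsum]
      apply Finset.sum_eq_zero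
      intro i _
      exact absurd i.isLt (by omega)
    norm_num at this
  have himg : Finset.univ.image p = Finset.univ.image q := by
    ext γ
    simp only [Finset.mem_image, Finset.mem_univ, true_and]
    constructor
    · rintro ⟨i, rfl⟩; obtain ⟨j, hj, -⟩ := hmatch i; exact ⟨j, hj⟩
    · rintro ⟨j, rfl⟩; obtain ⟨i, hi, -⟩ := hmatch' j; exact ⟨i, hi⟩
  have hcardp : (Finset.univ.image p).card = K0 * K ^ L := by
    rw [Finset.card_image_of_injective _ hp, Finset.card_univ, Fintype.card_fin]
  have hcardq : (Finset.univ.image q).card = K0' * K' ^ L := by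
    rw [Finset.card_image_of_injective _ hq, Finset.card_univ, Fintype.card_fin]
  have hCC : K0 * K ^ L = K0' * K' ^ L := by
    rw [← hcardp, himg, hcardq]
  obtain ⟨A0, hA0c, hA0m⟩ := hA0
  obtain ⟨B0, hB0c, hB0m⟩ := hB0
  obtain ⟨A0', hA0c', hA0m'⟩ := hA0'
  obtain ⟨B0', hB0c', hB0m'⟩ := hB0'
  set piB : Finset (Fin L → B) := Fintype.piFinset (fun _ : Fin L => B0) with hpiB
  set piB' : Finset (Fin L → B) := Fintype.piFinset (fun _ : Fin L => B0') with hpiB'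
  have hcardPiB : piB.card = K ^ L := by
    rw [hpiB, Fintype.card_piFinset]
    simp [hB0c]
  have hcardPiB' : piB'.card = K' ^ L := by
    rw [hpiB', Fintype.card_piFinset]
    simp [hB0c']
  have hprod : Finset.univ.image p = A0 ×ˢ piB := by
    refine Finset.eq_of_subset_of_card_le ?_ ?_
    · intro γ hγ
      obtain ⟨i, -, rfl⟩ := Finset.mem_image.mp hγ
      exact Finset.mem_product.mpr
        ⟨hA0m i, Fintype.mem_piFinset.mpr (fun s => hB0m i s)⟩
    · rw [Finset.card_product, hcardPiB, hA0c, hcardp]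
  have hprod' : Finset.univ.image q = A0' ×ˢ piB' := by
    refine Finset.eq_of_subset_of_card_le ?_ ?_
    · intro γ hγ
      obtain ⟨j, -, rfl⟩ := Finset.mem_image.mp hγ
      exact Finset.mem_product.mpr
        ⟨hA0m' j, Fintype.mem_piFinset.mpr (fun s => hB0m' j s)⟩
    · rw [Finset.card_product, hcardPiB', hA0c', hcardq, ← hCC]
  have hPP : A0 ×ˢ piB = A0' ×ˢ piB' := by rw [← hprod, himg, hprod']
  have hne : ((A0 ×ˢ piB : Finset (A × (Fin L → B)))).Nonempty := by
    rw [← hprod]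
    exact ⟨p ⟨0, hCpos⟩, Finset.mem_image_of_mem _ (Finset.mem_univ _)⟩
  obtain ⟨⟨a0, f0⟩, hmem0⟩ := hne
  have ha0 := Finset.mem_product.mp hmem0
  have hmem0' : ((a0, f0) : A × (Fin L → B)) ∈ A0' ×ˢ piB' := hPP ▸ hmem0
  have ha0' := Finset.mem_product.mp hmem0'
  have hAeq : A0 = A0' := by
    ext a
    constructor <;> intro ha
    · have h1 : ((a, f0) : A × (Fin L → B)) ∈ A0' ×ˢ piB' :=
        hPP ▸ Finset.mem_product.mpr ⟨ha, ha0.2⟩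
      exact (Finset.mem_product.mp h1).1
    · have h1 : ((a, f0) : A × (Fin L → B)) ∈ A0 ×ˢ piB :=
        hPP.symm ▸ Finset.mem_product.mpr ⟨ha, ha0'.2⟩
      exact (Finset.mem_product.mp h1).1
  have hBeq : B0 = B0' := by
    ext b
    constructor <;> intro hb
    · have h1 : ((a0, fun _ : Fin L => b) : A × (Fin L → B)) ∈ A0' ×ˢ piB' :=
        hPP ▸ Finset.mem_product.mpr ⟨ha0.1, Fintype.mem_piFinset.mpr (fun _ => hb)⟩
      exact Fintype.mem_piFinset.mp (Finset.mem_product.mp h1).2 ⟨0, hL⟩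
    · have h1 : ((a0, fun _ : Fin L => b) : A × (Fin L → B)) ∈ A0 ×ˢ piB :=
        hPP.symm ▸ Finset.mem_product.mpr ⟨ha0'.1, Fintype.mem_piFinset.mpr (fun _ => hb)⟩
      exact Fintype.mem_piFinset.mp (Finset.mem_product.mp h1).2 ⟨0, hL⟩
  refine ⟨hCC, by rw [← hA0c, ← hA0c', hAeq], by rw [← hB0c, ← hB0c', hBeq], ?_⟩
  intro i
  obtain ⟨j, hj, hcj⟩ := hmatch i
  have haj : aIdx' j = aIdx i := congrArg Prod.fst hj
  have hbj : bIdx' j = bIdx i := congrArg Prod.snd hj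
  exact ⟨j, hcj.symm, fun s1 s2 => by rw [hbj], fun h => by rw [haj],
    fun s x h => by rw [hbj]⟩
end
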